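/- arXiv:1611.01928 — 6 statements merged into one kernel-verified Lean document; each statement's English description precedes it below -/
import Mathlib

section
/- Let H be a complex Hilbert space, P an orthogonal projection on H, D a self-adjoint unitary (D² = 1), and γ a self-adjoint unitary with γD = -Dγ and γP = Pγ. Define A = γ(P - DPD) and B = γ(1 - P - DPD). Then A² + B² = 1. -/
/-- A² + B² = 1 for A = γ(P - DPD), B = γ(1 - P - DPD). -/
theorem stmt_0 {H : Type*} [NormedAddCommGroup H] [InnerProductSpace ℂ H] [CompleteSpace H]
    (P D γ : H →L[ℂ] H)
    (hP : ContinuousLinearMap.adjoint P = P) (hP2 : P * P = P)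
    (hD : ContinuousLinearMap.adjoint D = D) (hD2 : D * D = 1)
    (hγ : ContinuousLinearMap.adjoint γ = γ) (hγ2 : γ * γ = 1)
    (hγD : γ * D + D * γ = 0) (hγP : γ * P = P * γ) :
    (γ * (P - D * P * D)) * (γ * (P - D * P * D))
      + (γ * (1 - P - D * P * D)) * (γ * (1 - P - D * P * D)) = 1 := by
  set Q : H →L[ℂ] H := D * P * D with hQdef
  have hγD' : γ * D = -(D * γ) := eq_neg_of_add_eq_zero_left hγD
  have hQγ : γ * Q = Q * γ := by
    calc γ * Q = (γ * D) * P * D := by rw [hQdef]; noncomm_ring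
    _ = -(D * (γ * P) * D) := by rw [hγD']; noncomm_ring
    _ = -(D * P * (γ * D)) := by rw [hγP]; noncomm_ring
    _ = Q * γ := by rw [hγD', hQdef]; noncomm_ring
  have hQ2 : Q * Q = Q := by
    calc Q * Q = D * P * (D * D) * P * D := by rw [hQdef]; noncomm_ring
    _ = D * (P * P) * D := by rw [hD2]; noncomm_ring
    _ = Q := by rw [hP2]
  have hX : γ * (P - Q) * (γ * (P - Q)) = (P - Q) * (P - Q) := by
    have h1 : γ * (P - Q) = (P - Q) * γ := by rw [mul_sub, sub_mul, hγP, hQγ]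
    calc γ * (P - Q) * (γ * (P - Q)) = (P - Q) * (γ * γ) * (P - Q) := by
          nth_rewrite 1 [h1]; noncomm_ring
    _ = (P - Q) * (P - Q) := by rw [hγ2]; noncomm_ring
  have hY : γ * (1 - P - Q) * (γ * (1 - P - Q)) = (1 - P - Q) * (1 - P - Q) := by
    have h1 : γ * (1 - P - Q) = (1 - P - Q) * γ := by
      rw [mul_sub, mul_sub, sub_mul, sub_mul, hγP, hQγ, mul_one, one_mul]
    calc γ * (1 - P - Q) * (γ * (1 - P - Q)) = (1 - P - Q) * (γ * γ) * (1 - P - Q) := by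
          nth_rewrite 1 [h1]; noncomm_ring
    _ = (1 - P - Q) * (1 - P - Q) := by rw [hγ2]; noncomm_ring
  rw [hX, hY]
  have expand : (P - Q) * (P - Q) + (1 - P - Q) * (1 - P - Q)
      = 1 - 2 • P - 2 • Q + 2 • (P * P) + 2 • (Q * Q) := by noncomm_ring
  rw [expand, hP2, hQ2]
  noncomm_ring
end

section
/- Let H be a complex Hilbert space, P an orthogonal projection, D a self-adjoint unitary, and γ a self-adjoint unitary with γD = -Dγ and γP = Pγ. Define A = γ(P - DPD) and B = γ(1 - P - DPD). Then AB + BA = 0. -/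
/-- AB + BA = 0 for A = γ(P - DPD), B = γ(1 - P - DPD). -/
theorem stmt_1 {H : Type*} [NormedAddCommGroup H] [InnerProductSpace ℂ H] [CompleteSpace H]
    (P D γ : H →L[ℂ] H)
    (hP : ContinuousLinearMap.adjoint P = P) (hP2 : P * P = P)
    (hD : ContinuousLinearMap.adjoint D = D) (hD2 : D * D = 1)
    (hγ : ContinuousLinearMap.adjoint γ = γ) (hγ2 : γ * γ = 1)
    (hγD : γ * D + D * γ = 0) (hγP : γ * P = P * γ) :
    (γ * (P - D * P * D)) * (γ * (1 - P - D * P * D))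
      + (γ * (1 - P - D * P * D)) * (γ * (P - D * P * D)) = 0 := by
  have hγDneg : γ * D = -(D * γ) := eq_neg_of_add_eq_zero_left hγD
  have hDγneg : D * γ = -(γ * D) := eq_neg_of_add_eq_zero_right hγD
  -- γ commutes with Q = D*P*D
  have hQ : γ * (D * P * D) = (D * P * D) * γ := by
    calc γ * (D * P * D) = (γ * D) * P * D := by noncomm_ring
      _ = -(D * (γ * P) * D) := by rw [hγDneg]; noncomm_ring
      _ = -(D * P * (γ * D)) := by rw [hγP]; noncomm_ring
      _ = -(D * P * (-(D * γ))) := by rw [hγDneg]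
      _ = (D * P * D) * γ := by noncomm_ring
  -- Q is idempotent
  have hQ2 : (D * P * D) * (D * P * D) = D * P * D := by
    calc (D * P * D) * (D * P * D) = D * P * (D * D) * P * D := by noncomm_ring
      _ = D * (P * P) * D := by rw [hD2]; noncomm_ring
      _ = D * P * D := by rw [hP2]
  have hX : γ * (P - D * P * D) = (P - D * P * D) * γ := by
    rw [mul_sub, sub_mul, hγP, hQ]
  have hY : γ * (1 - P - D * P * D) = (1 - P - D * P * D) * γ := by
    rw [mul_sub, mul_sub, sub_mul, sub_mul, hγP, hQ, mul_one, one_mul]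
  have h1 : (γ * (P - D * P * D)) * (γ * (1 - P - D * P * D))
      = (P - D * P * D) * (1 - P - D * P * D) := by
    rw [hX]
    calc (P - D * P * D) * γ * (γ * (1 - P - D * P * D))
        = (P - D * P * D) * ((γ * γ) * (1 - P - D * P * D)) := by noncomm_ring
      _ = (P - D * P * D) * (1 - P - D * P * D) := by rw [hγ2, one_mul]
  have h2 : (γ * (1 - P - D * P * D)) * (γ * (P - D * P * D))
      = (1 - P - D * P * D) * (P - D * P * D) := by
    rw [hY]
    calc (1 - P - D * P * D) * γ * (γ * (P - D * P * D))
        = (1 - P - D * P * D) * ((γ * γ) * (P - D * P * D)) := by noncomm_ring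
      _ = (1 - P - D * P * D) * (P - D * P * D) := by rw [hγ2, one_mul]
  rw [h1, h2]
  have expand : (P - D * P * D) * (1 - P - D * P * D)
      + (1 - P - D * P * D) * (P - D * P * D)
      = 2 • (P - D * P * D) - 2 • (P * P) + 2 • ((D * P * D) * (D * P * D)) := by
    noncomm_ring
  rw [expand, hP2, hQ2]
  noncomm_ring
end

section
/- Let A and B be bounded self-adjoint operators on a complex Hilbert space with A² + B² = 1 and AB + BA = 0. Then for every λ with 0 < |λ| < 1, the eigenspaces ker(A - λ) and ker(A + λ) have the same dimension. -/
/-!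
Since `B` anticommutes with `A`, it maps the `μ`-eigenspace of `A` into the `-μ`-eigenspace.
It is injective there: if `A x = μ x` and `B x = 0`, then `A² + B² = 1` gives `x = μ² x`, so
`x = 0` when `μ² ≠ 1`. Hence the rank of the `μ`-eigenspace is at most that of the
`-μ`-eigenspace, and swapping `μ` and `-μ` gives equality.
-/

namespace Module.End

variable {K V : Type*} [Field K] [AddCommGroup V] [Module K V] {A B : End K V} {μ : K}

lemma disjoint_eigenspace_ker_of_mul_self_add_mul_self_eq_one (hsum : A * A + B * B = 1)
    (hμ : μ * μ ≠ 1) : Disjoint (A.eigenspace μ) (LinearMap.ker B) := by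
  rw [Submodule.disjoint_def]
  intro x hx hBx
  rw [mem_eigenspace_iff] at hx
  rw [LinearMap.mem_ker] at hBx
  have hx_eq : x = (μ * μ) • x := by
    simpa [hx, hBx, smul_smul] using (LinearMap.congr_fun hsum x).symm
  have : (1 - μ * μ) • x = 0 := by rw [sub_smul, one_smul, ← hx_eq, sub_self]
  exact (smul_eq_zero.mp this).resolve_left (sub_ne_zero.mpr hμ.symm)

lemma mapsTo_eigenspace_neg_of_anticomm (hanti : A * B + B * A = 0) :
    ∀ x ∈ A.eigenspace μ, B x ∈ A.eigenspace (-μ) := by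
  intro x hx
  rw [mem_eigenspace_iff] at hx ⊢
  have hABx : A (B x) + B (A x) = 0 := LinearMap.congr_fun hanti x
  rw [hx, map_smul] at hABx
  rw [neg_smul, eq_neg_iff_add_eq_zero, hABx]

lemma rank_eigenspace_le_rank_eigenspace_neg (hsum : A * A + B * B = 1)
    (hanti : A * B + B * A = 0) (hμ : μ * μ ≠ 1) :
    Module.rank K (A.eigenspace μ) ≤ Module.rank K (A.eigenspace (-μ)) :=
  LinearMap.rank_le_of_injective (B.restrict (mapsTo_eigenspace_neg_of_anticomm hanti))
    ((LinearMap.injective_restrict_iff _).mpr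
      (disjoint_eigenspace_ker_of_mul_self_add_mul_self_eq_one hsum hμ))

lemma rank_eigenspace_neg_eq_of_anticomm (hsum : A * A + B * B = 1) (hanti : A * B + B * A = 0)
    (hμ : μ * μ ≠ 1) : Module.rank K (A.eigenspace (-μ)) = Module.rank K (A.eigenspace μ) := by
  refine le_antisymm ?_ (rank_eigenspace_le_rank_eigenspace_neg hsum hanti hμ)
  have h := rank_eigenspace_le_rank_eigenspace_neg (μ := -μ) hsum hanti (by rwa [neg_mul_neg])
  rwa [neg_neg] at h

end Module.End

theorem stmt_3_general {H : Type*} [NormedAddCommGroup H] [InnerProductSpace ℂ H]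
    (A B : H →L[ℂ] H)
    (hsum : A * A + B * B = 1) (hanti : A * B + B * A = 0)
    (lam : ℝ) (hlam1 : |lam| < 1) :
    Module.rank ℂ (LinearMap.ker ((A - (lam : ℂ) • (1 : H →L[ℂ] H) : H →L[ℂ] H) : H →ₗ[ℂ] H)) =
      Module.rank ℂ (LinearMap.ker ((A + (lam : ℂ) • (1 : H →L[ℂ] H) : H →L[ℂ] H) : H →ₗ[ℂ] H)) := by
  have ker_eq_eigenspace (μ : ℂ) : LinearMap.ker ((A - μ • (1 : H →L[ℂ] H) : H →L[ℂ] H) : H →ₗ[ℂ] H)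
      = Module.End.eigenspace (A : Module.End ℂ H) μ := by
    rw [Module.End.eigenspace_def]; rfl
  have hsum' : (A : Module.End ℂ H) * A + (B : Module.End ℂ H) * B = 1 := by
    ext x; simpa using DFunLike.congr_fun hsum x
  have hanti' : (A : Module.End ℂ H) * B + (B : Module.End ℂ H) * A = 0 := by
    ext x; simpa using DFunLike.congr_fun hanti x
  have hlam : (lam : ℂ) * lam ≠ 1 := by
    have : lam * lam ≠ 1 := by nlinarith [abs_mul_abs_self lam, abs_nonneg lam]
    exact_mod_cast this
  rw [← sub_neg_eq_add, ← neg_smul, ker_eq_eigenspace, ker_eq_eigenspace]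
  exact (Module.End.rank_eigenspace_neg_eq_of_anticomm hsum' hanti' hlam).symm

/-- If A² + B² = 1 and AB + BA = 0 with A, B self-adjoint, then for 0 < |λ| < 1 the
eigenspaces ker(A - λ) and ker(A + λ) have the same dimension. -/
theorem stmt_3 {H : Type*} [NormedAddCommGroup H] [InnerProductSpace ℂ H] [CompleteSpace H]
    (A B : H →L[ℂ] H)
    (hA : ContinuousLinearMap.adjoint A = A) (hB : ContinuousLinearMap.adjoint B = B)
    (hsum : A * A + B * B = 1) (hanti : A * B + B * A = 0)
    (lam : ℝ) (hlam0 : 0 < |lam|) (hlam1 : |lam| < 1) :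
    Module.rank ℂ (LinearMap.ker ((A - (lam : ℂ) • (1 : H →L[ℂ] H) : H →L[ℂ] H) : H →ₗ[ℂ] H)) =
      Module.rank ℂ (LinearMap.ker ((A + (lam : ℂ) • (1 : H →L[ℂ] H) : H →L[ℂ] H) : H →ₗ[ℂ] H)) :=
  stmt_3_general A B hsum hanti lam hlam1
end

section
/- Let P be an orthogonal projection and U a unitary operator on a complex Hilbert space, and set T = P - U*PU. Then for a vector φ: Tφ = φ if and only if Pφ = φ and PUPφ = 0. Consequently ker(T - 1) = ker(PUP + (1 - P)). -/
/-!
If `P` projects onto `K`, then `re ⟪(P - V†PV) φ, φ⟫ = ‖P φ‖² - ‖P (V φ)‖²` for every bounded `V`.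
So `(P - V†PV) φ = φ` forces `‖φ‖² = ‖P φ‖² - ‖P (V φ)‖²`, and `‖P φ‖ ≤ ‖φ‖` then gives both
`P (V φ) = 0` and `‖P φ‖ = ‖φ‖`, i.e. `φ ∈ K`. For the kernels, `P (U P φ)` and `φ - P φ` lie in
the complementary ranges of `P` and `1 - P`, so their sum vanishes only if both do.
-/

open ContinuousLinearMap RCLike

lemma IsIdempotentElem.apply_add_sub_apply_eq_zero_iff {R M : Type*} [Semiring R]
    [AddCommGroup M] [Module R M] {p : M →ₗ[R] M} (hp : IsIdempotentElem p) (x y : M) :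
    p y + (x - p x) = 0 ↔ p x = x ∧ p y = 0 := by
  have hpp : ∀ z, p (p z) = p z := fun z => congr($hp z)
  constructor
  · intro h
    have hy : p y = 0 := by simpa [hpp] using congr(p $h)
    exact ⟨by rwa [hy, zero_add, sub_eq_zero, eq_comm] at h, hy⟩
  · rintro ⟨hx, hy⟩
    rw [hy, hx, sub_self, add_zero]

namespace Submodule

variable {𝕜 E : Type*} [RCLike 𝕜] [NormedAddCommGroup E] [InnerProductSpace 𝕜 E] [CompleteSpace E]
  (K : Submodule 𝕜 E) [K.HasOrthogonalProjection]

lemma re_inner_starProjection_sub_adjoint_conj_apply_self (V : E →L[𝕜] E) (x : E) :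
    re (inner 𝕜 ((K.starProjection - adjoint V * K.starProjection * V) x) x) =
      ‖K.starProjection x‖ ^ 2 - ‖K.starProjection (V x)‖ ^ 2 := by
  rw [sub_apply, mul_apply_eq_comp, mul_apply_eq_comp, inner_sub_left, map_sub, adjoint_inner_left,
    re_inner_starProjection_eq_normSq, re_inner_starProjection_eq_normSq]
  rfl

lemma starProjection_sub_adjoint_conj_apply_eq_self_iff (V : E →L[𝕜] E) (x : E) :
    (K.starProjection - adjoint V * K.starProjection * V) x = x ↔ x ∈ K ∧ V x ∈ Kᗮ := by
  constructor
  · intro h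
    have hre := K.re_inner_starProjection_sub_adjoint_conj_apply_self V x
    rw [h, inner_self_eq_norm_sq] at hre
    have hle : ‖K.starProjection x‖ ^ 2 ≤ ‖x‖ ^ 2 := by
      gcongr
      exact K.norm_starProjection_apply_le x
    have hPVx : ‖K.starProjection (V x)‖ ^ 2 = 0 := by
      linarith [sq_nonneg ‖K.starProjection (V x)‖]
    rw [mem_iff_norm_starProjection, ← starProjection_apply_eq_zero_iff, ← norm_eq_zero]
    exact ⟨(sq_eq_sq₀ (norm_nonneg _) (norm_nonneg _)).mp (by linarith),
      pow_eq_zero_iff two_ne_zero |>.mp hPVx⟩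
  · rintro ⟨hx, hVx⟩
    simp only [sub_apply, mul_apply_eq_comp, K.starProjection_eq_self_iff.mpr hx,
      K.starProjection_apply_eq_zero_iff.mpr hVx, map_zero, sub_zero]

end Submodule

theorem stmt_4_general {H : Type*} [NormedAddCommGroup H] [InnerProductSpace ℂ H] [CompleteSpace H]
    (P U : H →L[ℂ] H)
    (hP : ContinuousLinearMap.adjoint P = P) (hP2 : P * P = P) :
    (∀ φ : H, (P - ContinuousLinearMap.adjoint U * P * U) φ = φ ↔
        (P φ = φ ∧ P (U (P φ)) = 0)) ∧
    LinearMap.ker (((P - ContinuousLinearMap.adjoint U * P * U) - 1 : H →L[ℂ] H) : H →ₗ[ℂ] H) =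
      LinearMap.ker ((P * U * P + (1 - P) : H →L[ℂ] H) : H →ₗ[ℂ] H) := by
  have hPproj : IsStarProjection P := ⟨hP2, by rw [IsSelfAdjoint, star_eq_adjoint, hP]⟩
  obtain ⟨K, _, rfl⟩ := isStarProjection_iff_eq_starProjection.mp hPproj
  have fixed_iff : ∀ φ : H, (K.starProjection - adjoint U * K.starProjection * U) φ = φ ↔
      (K.starProjection φ = φ ∧ K.starProjection (U (K.starProjection φ)) = 0) := by
    intro φ
    rw [K.starProjection_sub_adjoint_conj_apply_eq_self_iff, ← K.starProjection_eq_self_iff,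
      ← K.starProjection_apply_eq_zero_iff]
    exact and_congr_right fun hφ => by rw [hφ]
  refine ⟨fixed_iff, ?_⟩
  ext φ
  rw [LinearMap.mem_ker, LinearMap.mem_ker, coe_coe, coe_coe, sub_apply,
    one_apply_eq_self, sub_eq_zero, fixed_iff, add_apply, mul_apply_eq_comp, mul_apply_eq_comp, sub_apply,
    one_apply_eq_self]
  exact (K.isIdempotentElem_starProjection.toLinearMap.apply_add_sub_apply_eq_zero_iff φ _).symm

/-- For T = P - U*PU: Tφ = φ iff Pφ = φ and PUPφ = 0, and
ker(T - 1) = ker(PUP + (1 - P)). -/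
theorem stmt_4 {H : Type*} [NormedAddCommGroup H] [InnerProductSpace ℂ H] [CompleteSpace H]
    (P U : H →L[ℂ] H)
    (hP : ContinuousLinearMap.adjoint P = P) (hP2 : P * P = P)
    (hU1 : ContinuousLinearMap.adjoint U * U = 1) (hU2 : U * ContinuousLinearMap.adjoint U = 1) :
    (∀ φ : H, (P - ContinuousLinearMap.adjoint U * P * U) φ = φ ↔
        (P φ = φ ∧ P (U (P φ)) = 0)) ∧
    LinearMap.ker (((P - ContinuousLinearMap.adjoint U * P * U) - 1 : H →L[ℂ] H) : H →ₗ[ℂ] H) =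
      LinearMap.ker ((P * U * P + (1 - P) : H →L[ℂ] H) : H →ₗ[ℂ] H) :=
  stmt_4_general P U hP hP2
end

section
/- Let P be an orthogonal projection and U a unitary operator on a complex Hilbert space, and set T = P - U*PU. Then ker(T + 1) = U* (ker(P U* P + (1 - P))), i.e., φ satisfies Tφ = -φ if and only if Uφ lies in the kernel of P U* P + (1 - P). -/
/-!
Write `T = P - U*PU`. Since `U*U = 1`, `T + 1 = P + U*(1 - P)U` is a sum of two orthogonal
projections, and `⟪(P + Q)φ, φ⟫ = ‖Pφ‖² + ‖Qφ‖²` shows that the kernel of such a sum is the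
intersection of the kernels. With `ψ = Uφ` this says `Tφ = -φ ↔ P(U*ψ) = 0 ∧ Pψ = ψ`.
On the other side `P U* P ψ` and `(1 - P)ψ` lie in the complementary ranges of `P` and `1 - P`,
so `(P U* P + (1 - P))ψ = 0` is the same pair of conditions.
-/

open RCLike
open scoped InnerProduct

section Idempotent

variable {R M : Type*} [Ring R] [TopologicalSpace M] [AddCommGroup M] [Module R M]
  {P : M →L[R] M}

theorem IsIdempotentElem.apply_add_sub_apply_eq_zero_iff_s5 (hP : IsIdempotentElem P) (x y : M) :
    P x + (y - P y) = 0 ↔ P x = 0 ∧ P y = y := by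
  have hPP (z : M) : P (P z) = P z := congr($hP.eq z)
  constructor
  · intro h
    have hPx : P x = 0 := by simpa [hPP] using congrArg P h
    rw [hPx, zero_add, sub_eq_zero] at h
    exact ⟨hPx, h.symm⟩
  · rintro ⟨hPx, hPy⟩
    rw [hPx, hPy, sub_self, add_zero]

theorem IsIdempotentElem.mul_mul_add_one_sub_apply_eq_zero_iff [IsTopologicalAddGroup M]
    (hP : IsIdempotentElem P) (V : M →L[R] M) (ψ : M) :
    (P * V * P + (1 - P)) ψ = 0 ↔ P (V ψ) = 0 ∧ P ψ = ψ := by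
  simp only [add_apply, sub_apply, mul_apply_eq_comp, one_apply_eq_self]
  rw [hP.apply_add_sub_apply_eq_zero_iff_s5]
  exact and_congr_left fun hPψ => by rw [hPψ]

end Idempotent

theorem IsStarProjection.conjugate'_of_mem_unitary {R : Type*} [Monoid R] [StarMul R] {p u : R}
    (hp : IsStarProjection p) (hu : u ∈ unitary R) : IsStarProjection (star u * p * u) where
  isIdempotentElem := by
    show star u * p * u * (star u * p * u) = star u * p * u
    calc star u * p * u * (star u * p * u) = star u * (p * (u * star u) * p) * u := by
          simp only [mul_assoc]
      _ = star u * p * u := by rw [Unitary.mul_star_self_of_mem hu, mul_one, hp.isIdempotentElem.eq]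
  isSelfAdjoint := hp.isSelfAdjoint.conjugate' u

section InnerProductSpace

variable {𝕜 E : Type*} [RCLike 𝕜] [NormedAddCommGroup E] [InnerProductSpace 𝕜 E]
  [CompleteSpace E] {P U : E →L[𝕜] E}

theorem IsStarProjection.re_inner_apply_self (hP : IsStarProjection P) (x : E) :
    re (inner 𝕜 (P x) x) = ‖P x‖ ^ 2 := by
  have hPadj : P† = P := hP.isSelfAdjoint
  have hPP : P (P x) = P x := congr($hP.isIdempotentElem.eq x)
  conv_lhs => rw [← hPP, ← ContinuousLinearMap.adjoint_inner_right, hPadj]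
  exact inner_self_eq_norm_sq _

theorem IsStarProjection.add_apply_eq_zero_iff {Q : E →L[𝕜] E} (hP : IsStarProjection P)
    (hQ : IsStarProjection Q) (x : E) : (P + Q) x = 0 ↔ P x = 0 ∧ Q x = 0 := by
  refine ⟨fun h => ?_, fun ⟨hPx, hQx⟩ => by rw [add_apply, hPx, hQx, add_zero]⟩
  have hsum : ‖P x‖ ^ 2 + ‖Q x‖ ^ 2 = 0 := by
    rw [← hP.re_inner_apply_self, ← hQ.re_inner_apply_self, ← map_add, ← inner_add_left,
      ← add_apply, h, inner_zero_left, map_zero]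
  simpa using (add_eq_zero_iff_of_nonneg (sq_nonneg _) (sq_nonneg _)).1 hsum

theorem IsStarProjection.sub_star_mul_mul_add_one_apply_star_eq_zero_iff
    (hP : IsStarProjection P) (hU : U ∈ unitary (E →L[𝕜] E)) (ψ : E) :
    (P - star U * P * U + 1) (star U ψ) = 0 ↔ P (star U ψ) = 0 ∧ P ψ = ψ := by
  have hsplit : P - star U * P * U + 1 = P + star U * (1 - P) * U := by
    rw [mul_sub, mul_one, sub_mul, Unitary.star_mul_self_of_mem hU]
    abel
  have hUstar : Function.LeftInverse U ⇑(star U) := fun x =>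
    congr($(Unitary.mul_star_self_of_mem hU) x)
  rw [hsplit, hP.add_apply_eq_zero_iff (hP.one_sub.conjugate'_of_mem_unitary hU)]
  refine and_congr_right' ?_
  rw [mul_apply_eq_comp, mul_apply_eq_comp, hUstar, map_eq_zero_iff _ hUstar.injective, sub_apply,
    one_apply_eq_self, sub_eq_zero, eq_comm]

end InnerProductSpace

/-- For T = P - U*PU: Tφ = -φ iff Uφ ∈ ker(P U* P + (1 - P)), and
ker(T + 1) = U* (ker(P U* P + (1 - P))). -/
theorem stmt_5 {H : Type*} [NormedAddCommGroup H] [InnerProductSpace ℂ H] [CompleteSpace H]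
    (P U : H →L[ℂ] H)
    (hP : ContinuousLinearMap.adjoint P = P) (hP2 : P * P = P)
    (hU1 : ContinuousLinearMap.adjoint U * U = 1) (hU2 : U * ContinuousLinearMap.adjoint U = 1) :
    (∀ φ : H, (P - ContinuousLinearMap.adjoint U * P * U) φ = -φ ↔
        (P * ContinuousLinearMap.adjoint U * P + (1 - P)) (U φ) = 0) ∧
    LinearMap.ker (((P - ContinuousLinearMap.adjoint U * P * U) + 1 : H →L[ℂ] H) : H →ₗ[ℂ] H) =
      Submodule.map (ContinuousLinearMap.adjoint U : H →ₗ[ℂ] H)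
        (LinearMap.ker ((P * ContinuousLinearMap.adjoint U * P + (1 - P) : H →L[ℂ] H) : H →ₗ[ℂ] H)) := by
  simp only [← ContinuousLinearMap.star_eq_adjoint] at hP hU1 hU2 ⊢
  have hPproj : IsStarProjection P := ⟨hP2, hP⟩
  have hU : U ∈ unitary (H →L[ℂ] H) := ⟨hU1, hU2⟩
  have hstarU (φ : H) : star U (U φ) = φ := congr($hU1 φ)
  have key (ψ : H) :
      (P - star U * P * U + 1) (star U ψ) = 0 ↔ (P * star U * P + (1 - P)) ψ = 0 := by
    rw [hPproj.sub_star_mul_mul_add_one_apply_star_eq_zero_iff hU,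
      hPproj.isIdempotentElem.mul_mul_add_one_sub_apply_eq_zero_iff]
  have eigen (φ : H) :
      (P - star U * P * U) φ = -φ ↔ (P * star U * P + (1 - P)) (U φ) = 0 := by
    rw [← key, hstarU, add_apply, one_apply_eq_self, add_eq_zero_iff_eq_neg]
  refine ⟨eigen, ?_⟩
  ext φ
  simp only [LinearMap.mem_ker, Submodule.mem_map, ContinuousLinearMap.coe_coe]
  constructor
  · intro h
    exact ⟨U φ, (key (U φ)).1 (by rwa [hstarU]), hstarU φ⟩
  · rintro ⟨ψ, hψ, rfl⟩
    exact (key ψ).2 hψ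
end

section
/- Let P and E be orthogonal projections on a complex Hilbert space, and set T = 1 - 2PEP and T' = 1 - 2EPE. Then the map v ↦ Ev restricts to a linear bijection from ker T onto ker T' (with inverse given on ker T' by w ↦ 2Pw). In particular, if both kernels are finite-dimensional, dim ker T = dim ker T'. -/
/-!
If `v = 2 PEPv`, then applying `P` gives `Pv = v`, so `v = 2 PEv`; applying `E` then shows
`Ev = 2 EPE(Ev)`. Thus `E` maps `ker T` into `ker T'` and `2P` recovers `v` from `Ev`. By the
symmetry `P ↔ E`, `2P` maps `ker T'` into `ker T` and `E` recovers `w` from `2Pw`, so the two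
maps are mutually inverse linear isomorphisms of the kernels.
-/

namespace Module.End

variable {R M : Type*} [Ring R] [AddCommGroup M] [Module R M] {p e : Module.End R M}

theorem mem_ker_one_sub_two_mul_iff {v : M} :
    v ∈ LinearMap.ker (1 - 2 * (p * e * p)) ↔ (2 : R) • p (e (p v)) = v := by
  rw [LinearMap.mem_ker, LinearMap.sub_apply, sub_eq_zero, eq_comm, ofNat_smul_eq_nsmul]
  rfl

theorem apply_eq_self_of_mem_ker_one_sub_two_mul (hp : IsIdempotentElem p) {v : M}
    (hv : v ∈ LinearMap.ker (1 - 2 * (p * e * p))) : p v = v := by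
  rw [mem_ker_one_sub_two_mul_iff] at hv
  rw [← hv, map_smul, ← mul_apply p p, hp.eq]

theorem two_smul_apply_apply_of_mem_ker_one_sub_two_mul (hp : IsIdempotentElem p) {v : M}
    (hv : v ∈ LinearMap.ker (1 - 2 * (p * e * p))) : (2 : R) • p (e v) = v := by
  have hpv := apply_eq_self_of_mem_ker_one_sub_two_mul hp hv
  rwa [mem_ker_one_sub_two_mul_iff, hpv] at hv

theorem apply_two_smul_apply_of_mem_ker_one_sub_two_mul (he : IsIdempotentElem e) {w : M}
    (hw : w ∈ LinearMap.ker (1 - 2 * (e * p * e))) : e ((2 : R) • p w) = w := by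
  rw [map_smul, two_smul_apply_apply_of_mem_ker_one_sub_two_mul he hw]

variable (hp : IsIdempotentElem p) (he : IsIdempotentElem e)
include hp he

theorem apply_mem_ker_one_sub_two_mul {v : M} (hv : v ∈ LinearMap.ker (1 - 2 * (p * e * p))) :
    e v ∈ LinearMap.ker (1 - 2 * (e * p * e)) := by
  rw [mem_ker_one_sub_two_mul_iff, ← mul_apply e e, he.eq, ← map_smul,
    two_smul_apply_apply_of_mem_ker_one_sub_two_mul hp hv]

theorem two_smul_apply_mem_ker_one_sub_two_mul {w : M}
    (hw : w ∈ LinearMap.ker (1 - 2 * (e * p * e))) :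
    (2 : R) • p w ∈ LinearMap.ker (1 - 2 * (p * e * p)) :=
  Submodule.smul_mem _ _ (apply_mem_ker_one_sub_two_mul he hp hw)

theorem bijOn_ker_one_sub_two_mul :
    Set.BijOn e (LinearMap.ker (1 - 2 * (p * e * p)) : Set M)
      (LinearMap.ker (1 - 2 * (e * p * e)) : Set M) :=
  Set.InvOn.bijOn (f' := fun w => (2 : R) • p w)
    ⟨fun _ hv => two_smul_apply_apply_of_mem_ker_one_sub_two_mul hp hv,
      fun _ hw => apply_two_smul_apply_of_mem_ker_one_sub_two_mul he hw⟩
    (fun _ hv => apply_mem_ker_one_sub_two_mul hp he hv)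
    (fun _ hw => two_smul_apply_mem_ker_one_sub_two_mul hp he hw)

def kerOneSubTwoMulEquiv :
    LinearMap.ker (1 - 2 * (p * e * p)) ≃ₗ[R] LinearMap.ker (1 - 2 * (e * p * e)) where
  toLinearMap := e.restrict fun _ hv => apply_mem_ker_one_sub_two_mul hp he hv
  invFun w := ⟨(2 : R) • p w, two_smul_apply_mem_ker_one_sub_two_mul hp he w.2⟩
  left_inv v := Subtype.ext (two_smul_apply_apply_of_mem_ker_one_sub_two_mul hp v.2)
  right_inv w := Subtype.ext (apply_two_smul_apply_of_mem_ker_one_sub_two_mul he w.2)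

end Module.End

theorem ContinuousLinearMap.coe_one_sub_two_mul {𝕜 V : Type*} [NormedField 𝕜]
    [NormedAddCommGroup V] [NormedSpace 𝕜 V] (A B : V →L[𝕜] V) :
    ((1 - 2 * (A * B * A) : V →L[𝕜] V) : V →ₗ[𝕜] V) = 1 - 2 * ((A : V →ₗ[𝕜] V) * B * A) := by
  ext v
  simp [two_mul]

open Module.End in
theorem stmt_6_general {H : Type*} [NormedAddCommGroup H] [InnerProductSpace ℂ H]
    (P E : H →L[ℂ] H)
    (hP2 : P * P = P)
    (hE2 : E * E = E) :
    Set.BijOn E (LinearMap.ker ((1 - 2 * (P * E * P) : H →L[ℂ] H) : H →ₗ[ℂ] H) : Set H)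
      (LinearMap.ker ((1 - 2 * (E * P * E) : H →L[ℂ] H) : H →ₗ[ℂ] H) : Set H) ∧
    (∀ w ∈ LinearMap.ker ((1 - 2 * (E * P * E) : H →L[ℂ] H) : H →ₗ[ℂ] H),
      (2 : ℂ) • P w ∈ LinearMap.ker ((1 - 2 * (P * E * P) : H →L[ℂ] H) : H →ₗ[ℂ] H) ∧ E ((2 : ℂ) • P w) = w) ∧
    (FiniteDimensional ℂ (LinearMap.ker ((1 - 2 * (P * E * P) : H →L[ℂ] H) : H →ₗ[ℂ] H)) →
      FiniteDimensional ℂ (LinearMap.ker ((1 - 2 * (E * P * E) : H →L[ℂ] H) : H →ₗ[ℂ] H)) →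
      Module.finrank ℂ (LinearMap.ker ((1 - 2 * (P * E * P) : H →L[ℂ] H) : H →ₗ[ℂ] H)) =
        Module.finrank ℂ (LinearMap.ker ((1 - 2 * (E * P * E) : H →L[ℂ] H) : H →ₗ[ℂ] H))) := by
  have hp : IsIdempotentElem (P : H →ₗ[ℂ] H) := IsIdempotentElem.map hP2 ContinuousLinearMap.toLinearMapRingHom
  have he : IsIdempotentElem (E : H →ₗ[ℂ] H) := IsIdempotentElem.map hE2 ContinuousLinearMap.toLinearMapRingHom
  rw [ContinuousLinearMap.coe_one_sub_two_mul P E, ContinuousLinearMap.coe_one_sub_two_mul E P]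
  exact ⟨bijOn_ker_one_sub_two_mul hp he,
    fun w hw => ⟨two_smul_apply_mem_ker_one_sub_two_mul hp he hw,
      apply_two_smul_apply_of_mem_ker_one_sub_two_mul he hw⟩,
    fun _ _ => (kerOneSubTwoMulEquiv hp he).finrank_eq⟩

/-- For projections P, E and T = 1 - 2PEP, T' = 1 - 2EPE, the map v ↦ Ev is a bijection
from ker T onto ker T', with inverse w ↦ 2Pw; in particular the kernels have equal
(finite) dimensions. -/
theorem stmt_6 {H : Type*} [NormedAddCommGroup H] [InnerProductSpace ℂ H] [CompleteSpace H]
    (P E : H →L[ℂ] H)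
    (hP : ContinuousLinearMap.adjoint P = P) (hP2 : P * P = P)
    (hE : ContinuousLinearMap.adjoint E = E) (hE2 : E * E = E) :
    Set.BijOn E (LinearMap.ker ((1 - 2 * (P * E * P) : H →L[ℂ] H) : H →ₗ[ℂ] H) : Set H)
      (LinearMap.ker ((1 - 2 * (E * P * E) : H →L[ℂ] H) : H →ₗ[ℂ] H) : Set H) ∧
    (∀ w ∈ LinearMap.ker ((1 - 2 * (E * P * E) : H →L[ℂ] H) : H →ₗ[ℂ] H),
      (2 : ℂ) • P w ∈ LinearMap.ker ((1 - 2 * (P * E * P) : H →L[ℂ] H) : H →ₗ[ℂ] H) ∧ E ((2 : ℂ) • P w) = w) ∧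
    (FiniteDimensional ℂ (LinearMap.ker ((1 - 2 * (P * E * P) : H →L[ℂ] H) : H →ₗ[ℂ] H)) →
      FiniteDimensional ℂ (LinearMap.ker ((1 - 2 * (E * P * E) : H →L[ℂ] H) : H →ₗ[ℂ] H)) →
      Module.finrank ℂ (LinearMap.ker ((1 - 2 * (P * E * P) : H →L[ℂ] H) : H →ₗ[ℂ] H)) =
        Module.finrank ℂ (LinearMap.ker ((1 - 2 * (E * P * E) : H →L[ℂ] H) : H →ₗ[ℂ] H))) :=
  stmt_6_general P E hP2 hE2
end
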